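/- arXiv:1004.1376 — 4 statements merged into one kernel-verified Lean document; each statement's English description precedes it below -/
import Mathlib

section
/- For all [ρ] ∈ Ĝ and q₁, q₂ ∈ Q, the composite T_{q₂}^{q₁([ρ])} ∘ T_{q₁}^{[ρ]} ∘ ρ(τ(q₁,q₂)) ∘ (T_{q₁q₂}^{[ρ]})⁻¹ ∈ End(V_{(q₁q₂)([ρ])}) commutes with the irreducible representation (q₁q₂)([ρ]) and is therefore a nonzero scalar multiple of the identity; equivalently, there is a unique scalar c^{[ρ]}(q₁,q₂) ∈ ℂ× such that T_{q₂}^{q₁([ρ])} ∘ T_{q₁}^{[ρ]} = c^{[ρ]}(q₁,q₂) · T_{q₁q₂}^{[ρ]} ∘ ρ(τ(q₁,q₂))⁻¹. -/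
noncomputable section

/-- A representation is irreducible if the space is nonzero and has no nontrivial invariant
subspace. -/
def IsIrredRep {K V : Type} [Group K] [AddCommGroup V] [Module ℂ V]
    (ρ : Representation ℂ K V) : Prop :=
  Nontrivial V ∧
    ∀ W : Submodule ℂ V, (∀ (k : K), ∀ v ∈ W, ρ k v ∈ W) → W = ⊥ ∨ W = ⊤

/-- Two representations are isomorphic if there is an intertwining linear equivalence. -/
def RepIso {K V W : Type} [Group K] [AddCommGroup V] [Module ℂ V]
    [AddCommGroup W] [Module ℂ W]
    (ρ : Representation ℂ K V) (σ : Representation ℂ K W) : Prop :=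
  ∃ e : V ≃ₗ[ℂ] W, ∀ (k : K) (v : V), e (ρ k v) = σ k (e v)

/-- The representation `g ↦ ρ (h·g·h⁻¹)` of the (normal) kernel of `j`, for `h : H`. -/
def conjRep {H Q : Type} [Group H] [Group Q] (j : H →* Q) {V : Type}
    [AddCommGroup V] [Module ℂ V] (ρ : Representation ℂ j.ker V) (h : H) :
    Representation ℂ j.ker V :=
  MonoidHom.comp ρ (MulAut.conjNormal h).toMonoidHom

/-- `τ(q₁,q₂) := s q₁ * s q₂ * (s (q₁ q₂))⁻¹`, an element of `G = ker j`. -/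
def tau {H Q : Type} [Group H] [Group Q] (j : H →* Q) (s : Q → H)
    (hs : ∀ q, j (s q) = q) (q₁ q₂ : Q) : j.ker :=
  ⟨s q₁ * s q₂ * (s (q₁ * q₂))⁻¹, by simp [MonoidHom.mem_ker, hs, mul_assoc]⟩

/-- Transport along an equality of indices, as a linear map. -/
def castHom {Ghat : Type} (V : Ghat → Type) [∀ r, AddCommGroup (V r)]
    [∀ r, Module ℂ (V r)] {a b : Ghat} (h : a = b) : V a →ₗ[ℂ] V b where
  toFun v := cast (congrArg V h) v
  map_add' := by subst h; intros; rfl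
  map_smul' := by subst h; intros; rfl

/-- Schur's lemma: an endomorphism commuting with an irreducible representation is scalar. -/
lemma schur_scalar {K V : Type} [Group K] [AddCommGroup V] [Module ℂ V]
    [FiniteDimensional ℂ V] (ρ : Representation ℂ K V) (h : IsIrredRep ρ)
    (D : V →ₗ[ℂ] V) (hD : ∀ k v, D (ρ k v) = ρ k (D v)) :
    ∃ c : ℂ, ∀ v, D v = c • v := by
  obtain ⟨hnt, hinv⟩ := h
  haveI := hnt
  obtain ⟨c, hc⟩ := Module.End.exists_eigenvalue (D : Module.End ℂ V)
  obtain ⟨v, hv⟩ := hc.exists_hasEigenvector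
  refine ⟨c, ?_⟩
  set W : Submodule ℂ V := LinearMap.ker (D - c • (LinearMap.id : V →ₗ[ℂ] V)) with hW
  have hmem : ∀ u, u ∈ W ↔ D u = c • u := by
    intro u
    simp [hW, LinearMap.mem_ker, sub_eq_zero]
  have hWinv : ∀ (k : K), ∀ u ∈ W, ρ k u ∈ W := by
    intro k u hu
    rw [hmem] at hu ⊢
    rw [hD, hu, map_smul]
  rcases hinv W hWinv with h0 | htop
  · exfalso
    have hvW : v ∈ W := (hmem v).2 hv.apply_eq_smul
    rw [h0, Submodule.mem_bot] at hvW
    exact hv.2 hvW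
  · intro u
    exact (hmem u).1 (htop ▸ Submodule.mem_top)

lemma castHom_castHom {Ghat : Type} (V : Ghat → Type) [∀ r, AddCommGroup (V r)]
    [∀ r, Module ℂ (V r)] {a b : Ghat} (h : a = b) (v : V a) :
    castHom V h.symm (castHom V h v) = v := by subst h; rfl

lemma castHom_rep {H Q : Type} [Group H] [Group Q] {j : H →* Q} {Ghat : Type}
    (V : Ghat → Type) [∀ r, AddCommGroup (V r)] [∀ r, Module ℂ (V r)]
    (ρ : ∀ r, Representation ℂ j.ker (V r)) {a b : Ghat} (h : a = b)
    (g : j.ker) (v : V a) :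
    castHom V h (ρ a g v) = ρ b g (castHom V h v) := by subst h; rfl

lemma castHom_eq_zero_iff {Ghat : Type} (V : Ghat → Type) [∀ r, AddCommGroup (V r)]
    [∀ r, Module ℂ (V r)] {a b : Ghat} (h : a = b) (v : V a) :
    castHom V h v = 0 ↔ v = 0 := by subst h; exact Iff.rfl

/-- With `Ĝ` the set of (representatives of) isomorphism classes of
irreducible complex representations of `G = ker j`, the `Q`-action `act` on `Ĝ`, and chosen
intertwiners `T_q^{[ρ]} : V_ρ ≃ V_{q([ρ])}`: for all `[ρ] ∈ Ĝ` and `q₁, q₂ ∈ Q`, the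
composite `T_{q₂}^{q₁([ρ])} ∘ T_{q₁}^{[ρ]} ∘ ρ(τ(q₁,q₂)) ∘ (T_{q₁q₂}^{[ρ]})⁻¹`, viewed as an
endomorphism of `V_{(q₁q₂)([ρ])}`, commutes with the representation `(q₁q₂)([ρ])`; and there
is a unique nonzero scalar `c^{[ρ]}(q₁,q₂) ∈ ℂˣ` with
`T_{q₂}^{q₁([ρ])} ∘ T_{q₁}^{[ρ]} = c^{[ρ]}(q₁,q₂) · T_{q₁q₂}^{[ρ]} ∘ ρ(τ(q₁,q₂))⁻¹`. -/
theorem stmt3 {H Q : Type} [Group H] [Group Q] [Fintype H] [Fintype Q]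
    (j : H →* Q) (hj : Function.Surjective j)
    (s : Q → H) (hs : ∀ q, j (s q) = q) (hs1 : s 1 = 1)
    {Ghat : Type} [Fintype Ghat]
    (V : Ghat → Type) [∀ r, AddCommGroup (V r)] [∀ r, Module ℂ (V r)]
    [∀ r, FiniteDimensional ℂ (V r)]
    (ρ : ∀ r, Representation ℂ j.ker (V r))
    (hirr : ∀ r, IsIrredRep (ρ r))
    (hdist : ∀ r r', RepIso (ρ r) (ρ r') → r = r')
    (act : Q → Ghat → Ghat)
    (hact : ∀ q r, RepIso (conjRep j (ρ r) (s q)) (ρ (act q r)))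
    (hactmul : ∀ (q₁ q₂ : Q) (r : Ghat), act q₂ (act q₁ r) = act (q₁ * q₂) r)
    (T : ∀ (q : Q) (r : Ghat), V r ≃ₗ[ℂ] V (act q r))
    (hT : ∀ (q : Q) (r : Ghat) (g : j.ker) (v : V r),
      T q r (conjRep j (ρ r) (s q) g v) = ρ (act q r) g (T q r v)) :
    ∀ (r : Ghat) (q₁ q₂ : Q),
      (∀ (g : j.ker) (v : V (act (q₁ * q₂) r)),
        castHom V (hactmul q₁ q₂ r)
            (T q₂ (act q₁ r) (T q₁ r (ρ r (tau j s hs q₁ q₂) ((T (q₁ * q₂) r).symm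
              (ρ (act (q₁ * q₂) r) g v))))) =
          ρ (act (q₁ * q₂) r) g
            (castHom V (hactmul q₁ q₂ r)
              (T q₂ (act q₁ r) (T q₁ r (ρ r (tau j s hs q₁ q₂) ((T (q₁ * q₂) r).symm v)))))) ∧
      (∃! cval : ℂ, cval ≠ 0 ∧ ∀ v : V r,
        T q₂ (act q₁ r) (T q₁ r v) =
          cval • castHom V (hactmul q₁ q₂ r).symm
            (T (q₁ * q₂) r (ρ r ((tau j s hs q₁ q₂)⁻¹) v))) := by
  intro r q₁ q₂
  set τ := tau j s hs q₁ q₂ with hτ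
  have h12 := hactmul q₁ q₂ r
  -- group identity: τ * (s(q₁q₂) g s(q₁q₂)⁻¹) = (s q₁ (s q₂ g s q₂⁻¹) s q₁⁻¹) * τ
  have hgrp : ∀ g : j.ker,
      τ * MulAut.conjNormal (s (q₁ * q₂)) g
        = MulAut.conjNormal (s q₁) (MulAut.conjNormal (s q₂) g) * τ := by
    intro g
    ext
    simp only [Subgroup.coe_mul, MulAut.conjNormal_apply, hτ, tau]
    group
  -- key intertwining computation
  have key : ∀ (g : j.ker) (w : V r),
      T q₂ (act q₁ r) (T q₁ r (ρ r τ (ρ r (MulAut.conjNormal (s (q₁ * q₂)) g) w)))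
        = ρ (act q₂ (act q₁ r)) g (T q₂ (act q₁ r) (T q₁ r (ρ r τ w))) := by
    intro g w
    have h1 : ρ r τ (ρ r (MulAut.conjNormal (s (q₁ * q₂)) g) w)
        = ρ r (MulAut.conjNormal (s q₁) (MulAut.conjNormal (s q₂) g)) (ρ r τ w) := by
      have := congrArg (fun x => ρ r x w) (hgrp g)
      simpa [map_mul] using this
    rw [h1]
    have h2 : T q₁ r (ρ r (MulAut.conjNormal (s q₁) (MulAut.conjNormal (s q₂) g)) (ρ r τ w))
        = ρ (act q₁ r) (MulAut.conjNormal (s q₂) g) (T q₁ r (ρ r τ w)) :=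
      hT q₁ r (MulAut.conjNormal (s q₂) g) (ρ r τ w)
    rw [h2]
    exact hT q₂ (act q₁ r) g (T q₁ r (ρ r τ w))
  -- Part 1
  have part1 : ∀ (g : j.ker) (v : V (act (q₁ * q₂) r)),
      castHom V h12
          (T q₂ (act q₁ r) (T q₁ r (ρ r τ ((T (q₁ * q₂) r).symm
            (ρ (act (q₁ * q₂) r) g v))))) =
        ρ (act (q₁ * q₂) r) g
          (castHom V h12
            (T q₂ (act q₁ r) (T q₁ r (ρ r τ ((T (q₁ * q₂) r).symm v))))) := by
    intro g v
    have hsymm : (T (q₁ * q₂) r).symm (ρ (act (q₁ * q₂) r) g v)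
        = ρ r (MulAut.conjNormal (s (q₁ * q₂)) g) ((T (q₁ * q₂) r).symm v) := by
      have h3 := hT (q₁ * q₂) r g ((T (q₁ * q₂) r).symm v)
      rw [LinearEquiv.apply_symm_apply] at h3
      apply (T (q₁ * q₂) r).injective
      rw [LinearEquiv.apply_symm_apply]
      exact h3.symm
    rw [hsymm, key g ((T (q₁ * q₂) r).symm v), castHom_rep V ρ h12]
  refine ⟨part1, ?_⟩
  -- Part 2: Schur
  set D : V (act (q₁ * q₂) r) →ₗ[ℂ] V (act (q₁ * q₂) r) :=
    (castHom V h12) ∘ₗ (T q₂ (act q₁ r)).toLinearMap ∘ₗ (T q₁ r).toLinearMap ∘ₗ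
      (ρ r τ) ∘ₗ (T (q₁ * q₂) r).symm.toLinearMap with hD
  have hDapp : ∀ v, D v = castHom V h12
      (T q₂ (act q₁ r) (T q₁ r (ρ r τ ((T (q₁ * q₂) r).symm v)))) := fun v => rfl
  obtain ⟨c, hc⟩ := schur_scalar (ρ (act (q₁ * q₂) r)) (hirr (act (q₁ * q₂) r)) D
    (fun g v => by rw [hDapp, hDapp]; exact part1 g v)
  have hinv : ∀ v : V r, ρ r τ (ρ r τ⁻¹ v) = v := by
    intro v
    rw [← Module.End.mul_apply, ← map_mul, mul_inv_cancel, map_one, Module.End.one_apply]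
  -- the existence formula
  have hform : ∀ v : V r, T q₂ (act q₁ r) (T q₁ r v) =
      c • castHom V h12.symm (T (q₁ * q₂) r (ρ r τ⁻¹ v)) := by
    intro v
    have h1 : D (T (q₁ * q₂) r (ρ r τ⁻¹ v))
        = castHom V h12 (T q₂ (act q₁ r) (T q₁ r v)) := by
      rw [hDapp, LinearEquiv.symm_apply_apply, hinv]
    have h2 := hc (T (q₁ * q₂) r (ρ r τ⁻¹ v))
    rw [h1] at h2
    have := congrArg (castHom V h12.symm) h2
    rw [castHom_castHom, map_smul] at this
    exact this
  -- c ≠ 0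
  haveI : Nontrivial (V r) := (hirr r).1
  obtain ⟨v0, hv0⟩ := exists_ne (0 : V r)
  have hc0 : c ≠ 0 := by
    intro h0
    have := hform v0
    rw [h0, zero_smul] at this
    have h1 : T q₁ r v0 = 0 := by
      apply (T q₂ (act q₁ r)).injective
      simpa using this
    have h2 : v0 = 0 := by
      apply (T q₁ r).injective
      simpa using h1
    exact hv0 h2
  refine ⟨c, ⟨hc0, hform⟩, ?_⟩
  rintro c' ⟨hc'0, hform'⟩
  have hX : castHom V h12.symm (T (q₁ * q₂) r (ρ r τ⁻¹ v0)) ≠ 0 := by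
    rw [Ne, castHom_eq_zero_iff, LinearEquiv.map_eq_zero_iff]
    intro h0
    apply hv0
    have := congrArg (ρ r τ) h0
    rwa [hinv, map_zero] at this
  have heq : c' • castHom V h12.symm (T (q₁ * q₂) r (ρ r τ⁻¹ v0))
      = c • castHom V h12.symm (T (q₁ * q₂) r (ρ r τ⁻¹ v0)) := by
    rw [← hform v0, ← hform' v0]
  exact smul_left_injective ℂ hX heq
end
end

section
/- Let G be a finite abelian group, φ : Q → Aut(G) a homomorphism from a finite group Q, H := G ⋊_φ Q the semidirect product, and j : H → Q the projection. Let Ĝ := Hom(G, ℂ×) be the character group of G, with Q acting by (q·χ)(g) := χ(φ(q)(g)). Fix q ∈ Q, let ⟨q⟩ be its conjugacy class in Q, C_Q(q) its centralizer, and Ĝ^q := {χ ∈ Ĝ : q·χ = χ}. Then the number of conjugacy classes of H contained in j⁻¹(⟨q⟩) equals the number of orbits of C_Q(q) acting on Ĝ^q. -/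
noncomputable section

/-- The orbit equivalence relation for the action of the centralizer `C_Q(q)` on the set
`Ĝ^q = {χ ∈ Hom(G,ℂ×) : χ∘φ(q) = χ}` of `q`-fixed characters of a finite abelian group `G`,
where `Q` acts on characters by `(u·χ)(g) := χ(φ(u)(g))`. -/
def charSetoid {G Q : Type} [CommGroup G] [Group Q] (φ : Q →* MulAut G) (q : Q) :
    Setoid {χ : G →* ℂˣ // ∀ g, χ (φ q g) = χ g} where
  r χ χ' := ∃ u ∈ Subgroup.centralizer ({q} : Set Q), ∀ g, χ.1 (φ u g) = χ'.1 g
  iseqv := by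
    constructor
    · exact fun χ => ⟨1, Subgroup.one_mem _, fun g => by simp⟩
    · rintro χ χ' ⟨u, hu, h⟩
      refine ⟨u⁻¹, Subgroup.inv_mem _ hu, fun g => ?_⟩
      rw [← h (φ u⁻¹ g)]
      have : φ u (φ u⁻¹ g) = (φ u * φ u⁻¹) g := rfl
      rw [this, ← map_mul, mul_inv_cancel, map_one]
      rfl
    · rintro χ χ' χ'' ⟨u, hu, h⟩ ⟨u', hu', h'⟩
      refine ⟨u * u', Subgroup.mul_mem _ hu hu', fun g => ?_⟩
      rw [map_mul]
      have : (φ u * φ u') g = φ u (φ u' g) := rfl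
      rw [this, h, h']

namespace Stmt16Aux

lemma card_dual (B : Type) [CommGroup B] [Finite B] :
    Nat.card (B →* ℂˣ) = Nat.card B := by
  have : NeZero (Monoid.exponent B) := ⟨Monoid.exponent_ne_zero_of_finite⟩
  have : NeZero ((Monoid.exponent B : ℂ)) := ⟨by exact_mod_cast this.1⟩
  obtain ⟨e⟩ := CommGroup.monoidHom_mulEquiv_of_hasEnoughRootsOfUnity B ℂ
  exact Nat.card_congr e.toEquiv

lemma finite_dual (B : Type) [CommGroup B] [Finite B] :
    Finite (B →* ℂˣ) := by
  have : NeZero (Monoid.exponent B) := ⟨Monoid.exponent_ne_zero_of_finite⟩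
  have : NeZero ((Monoid.exponent B : ℂ)) := ⟨by exact_mod_cast this.1⟩
  obtain ⟨e⟩ := CommGroup.monoidHom_mulEquiv_of_hasEnoughRootsOfUnity B ℂ
  exact Finite.of_equiv B e.toEquiv.symm

/-- fixed points of an automorphism of a finite abelian group are equinumerous
with fixed characters. -/
lemma card_fixed_eq_card_fixed_char (B : Type) [CommGroup B] [Finite B] (β : B ≃* B) :
    Nat.card {b : B // β b = b} = Nat.card {ψ : B →* ℂˣ // ∀ b, ψ (β b) = ψ b} := by
  classical
  set f : B →* B :=
    { toFun := fun b => b⁻¹ * β b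
      map_one' := by simp
      map_mul' := fun a b => by
        simp only [map_mul, mul_inv_rev]
        simp [mul_comm, mul_left_comm, mul_assoc] } with hf
  have h1 : Nat.card {b : B // β b = b} = Nat.card f.ker := by
    refine Nat.card_congr (Equiv.subtypeEquivRight fun b => ?_)
    rw [MonoidHom.mem_ker]
    show β b = b ↔ b⁻¹ * β b = 1
    rw [inv_mul_eq_one, eq_comm]
  have hker : ∀ ψ : B →* ℂˣ, (∀ b, ψ (β b) = ψ b) ↔ ∀ x ∈ f.range, ψ x = 1 := by
    intro ψ
    constructor
    · rintro h x ⟨b, rfl⟩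
      simp [hf, h b]
    · intro h b
      have := h (f b) ⟨b, rfl⟩
      simp only [hf, MonoidHom.coe_mk, OneHom.coe_mk, map_mul, map_inv] at this
      have := inv_mul_eq_one.mp this
      exact this.symm
  have E : {ψ : B →* ℂˣ // ∀ b, ψ (β b) = ψ b} ≃ ((B ⧸ f.range) →* ℂˣ) := by
    refine
      { toFun := fun ψ => QuotientGroup.lift f.range ψ.1 ((hker ψ.1).mp ψ.2)
        invFun := fun τ => ⟨τ.comp (QuotientGroup.mk' f.range), fun b => ?_⟩
        left_inv := fun ψ => ?_
        right_inv := fun τ => ?_ }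
    · simp only [MonoidHom.comp_apply, QuotientGroup.mk'_apply]
      congr 1
      rw [QuotientGroup.eq]
      exact ⟨b⁻¹, by simp [hf, mul_comm]⟩
    · ext b; rfl
    · refine MonoidHom.ext fun x => ?_
      induction x using QuotientGroup.induction_on with
      | H b => rfl
  have h2 : Nat.card {ψ : B →* ℂˣ // ∀ b, ψ (β b) = ψ b} = Nat.card (B ⧸ f.range) := by
    rw [Nat.card_congr E, card_dual]
  rw [h1, h2]
  -- card (B ⧸ range) = card ker
  have e1 : Nat.card B = Nat.card (B ⧸ f.range) * Nat.card f.range :=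
    Subgroup.card_eq_card_quotient_mul_card_subgroup f.range
  have e2 : Nat.card B = Nat.card (B ⧸ f.ker) * Nat.card f.ker :=
    Subgroup.card_eq_card_quotient_mul_card_subgroup f.ker
  have e3 : Nat.card (B ⧸ f.ker) = Nat.card f.range :=
    Nat.card_congr (QuotientGroup.quotientKerEquivRange f).toEquiv
  have hpos : 0 < Nat.card f.range := Nat.card_pos
  have := e1.symm.trans e2
  rw [e3] at this
  exact Nat.eq_of_mul_eq_mul_right hpos (by linarith [this])

open MulAction in
lemma orbit_count_eq {Γ : Type} [Group Γ] [Finite Γ] {X Y : Type} [Finite X] [Finite Y]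
    [MulAction Γ X] [MulAction Γ Y]
    (h : ∀ γ : Γ, Nat.card (fixedBy X γ) = Nat.card (fixedBy Y γ)) :
    Nat.card (Quotient (orbitRel Γ X)) = Nat.card (Quotient (orbitRel Γ Y)) := by
  classical
  cases nonempty_fintype Γ
  have fx : Fintype X := Fintype.ofFinite X
  have fy : Fintype Y := Fintype.ofFinite Y
  have fqx : Fintype (orbitRel.Quotient Γ X) := Fintype.ofFinite _
  have fqy : Fintype (orbitRel.Quotient Γ Y) := Fintype.ofFinite _
  have hx := sum_card_fixedBy_eq_card_orbits_mul_card_group Γ X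
  have hy := sum_card_fixedBy_eq_card_orbits_mul_card_group Γ Y
  have hsum : (∑ γ : Γ, Fintype.card (fixedBy X γ)) = ∑ γ : Γ, Fintype.card (fixedBy Y γ) := by
    refine Finset.sum_congr rfl fun γ _ => ?_
    have := h γ
    simpa [Nat.card_eq_fintype_card] using this
  have : Fintype.card (orbitRel.Quotient Γ X) = Fintype.card (orbitRel.Quotient Γ Y) := by
    have hΓ : 0 < Fintype.card Γ := Fintype.card_pos
    exact Nat.eq_of_mul_eq_mul_right hΓ (by rw [← hx, ← hy, hsum])
  show Nat.card (orbitRel.Quotient Γ X) = Nat.card (orbitRel.Quotient Γ Y)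
  simpa [Nat.card_eq_fintype_card] using this


variable {G Q : Type} [CommGroup G] [Group Q] (φ : Q →* MulAut G) (q : Q)

/-- The twist homomorphism `a ↦ a⁻¹ * φ q a`. -/
def twHom : G →* G where
  toFun a := a⁻¹ * φ q a
  map_one' := by simp
  map_mul' a b := by
    simp only [map_mul, mul_inv_rev]
    simp [mul_comm, mul_left_comm, mul_assoc]

@[simp] lemma twHom_apply (a : G) : twHom φ q a = a⁻¹ * φ q a := rfl

/-- The subgroup of twisted commutators. -/
def Kq : Subgroup G := (twHom φ q).range

/-- The twisted-coset quotient. -/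
abbrev Aq := G ⧸ Kq φ q

abbrev Cq : Subgroup Q := Subgroup.centralizer ({q} : Set Q)

lemma comm_of_mem {u : Q} (hu : u ∈ Cq q) : q * u = u * q :=
  Subgroup.mem_centralizer_iff.mp hu q rfl

lemma mulAut_mul_apply (u v : Q) (g : G) : φ (u * v) g = φ u (φ v g) := by
  rw [map_mul]; rfl

lemma phi_comm {u : Q} (hu : u ∈ Cq q) (g : G) : φ u (φ q g) = φ q (φ u g) := by
  rw [← mulAut_mul_apply, ← mulAut_mul_apply, comm_of_mem q hu]

lemma phi_apply_apply_inv (u : Q) (g : G) : φ u (φ u⁻¹ g) = g := by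
  rw [← mulAut_mul_apply, mul_inv_cancel, map_one]; rfl

lemma phi_inv_apply_apply (u : Q) (g : G) : φ u⁻¹ (φ u g) = g := by
  rw [← mulAut_mul_apply, inv_mul_cancel, map_one]; rfl

lemma Kq_mem_map {u : Q} (hu : u ∈ Cq q) {x : G} (hx : x ∈ Kq φ q) : φ u x ∈ Kq φ q := by
  obtain ⟨a, rfl⟩ := hx
  exact ⟨φ u a, by simp [phi_comm φ q hu]⟩

instance actA : MulAction (Cq q) (Aq φ q) where
  smul u := Quotient.map' (φ u.1) (fun a b h => by
    rw [QuotientGroup.leftRel_apply] at *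
    simpa using Kq_mem_map φ q u.2 h)
  one_smul x := by
    induction x using Quotient.inductionOn' with
    | h g => show Quotient.map' _ _ _ = _; simp [Quotient.map'_mk'']
  mul_smul u v x := by
    induction x using Quotient.inductionOn' with
    | h g =>
      show Quotient.map' (φ (u.1 * v.1)) _ _ = Quotient.map' (φ u.1) _ (Quotient.map' (φ v.1) _ _)
      simp only [Quotient.map'_mk'']
      rw [mulAut_mul_apply]

lemma smul_mkA (u : Cq q) (g : G) :
    u • (QuotientGroup.mk g : Aq φ q) = QuotientGroup.mk (φ u.1 g) := rfl

/-- The set of `q`-fixed characters. -/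
abbrev Xq := {χ : G →* ℂˣ // ∀ g, χ (φ q g) = χ g}

instance actX : MulAction (Cq q) (Xq φ q) where
  smul u χ := ⟨χ.1.comp (φ ((u:Q)⁻¹)).toMonoidHom, fun g => by
    simp only [MonoidHom.comp_apply, MulEquiv.coe_toMonoidHom]
    rw [phi_comm φ q (Subgroup.inv_mem _ u.2), χ.2]⟩
  one_smul χ := Subtype.ext (MonoidHom.ext fun g => by
    show χ.1 (φ ((1:Q))⁻¹ g) = χ.1 g
    simp)
  mul_smul u v χ := Subtype.ext (MonoidHom.ext fun g => by
    show χ.1 (φ (u.1 * v.1)⁻¹ g) = χ.1 (φ v.1⁻¹ (φ u.1⁻¹ g))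
    rw [mul_inv_rev, mulAut_mul_apply])

lemma smul_X_apply (u : Cq q) (χ : Xq φ q) (g : G) :
    (u • χ).1 g = χ.1 (φ ((u:Q)⁻¹) g) := rfl

open MulAction in
lemma charSetoid_eq : (charSetoid φ q) = orbitRel (Cq q) (Xq φ q) := by
  apply Setoid.ext
  intro χ χ'
  show (∃ u ∈ Subgroup.centralizer ({q} : Set Q), ∀ g, χ.1 (φ u g) = χ'.1 g) ↔ _
  rw [orbitRel_apply, mem_orbit_iff]
  constructor
  · rintro ⟨u, hu, h⟩
    refine ⟨⟨u, hu⟩, ?_⟩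
    apply Subtype.ext; apply MonoidHom.ext; intro g
    show χ'.1 (φ u⁻¹ g) = χ.1 g
    rw [← h (φ u⁻¹ g), phi_apply_apply_inv]
  · rintro ⟨u, rfl⟩
    refine ⟨u.1, u.2, fun g => ?_⟩
    show χ'.1 (φ u.1⁻¹ (φ u.1 g)) = χ'.1 g
    rw [phi_inv_apply_apply]

-- Part C: betaA, charEquiv, fixed point counts, class bijection

lemma Kq_map {u : Q} (hu : u ∈ Cq q) :
    (Kq φ q).map ((φ u : G ≃* G) : G →* G) = Kq φ q := by
  apply le_antisymm
  · rintro x ⟨y, hy, rfl⟩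
    exact Kq_mem_map φ q hu hy
  · intro x hx
    exact ⟨φ u⁻¹ x, Kq_mem_map φ q (Subgroup.inv_mem _ hu) hx, phi_apply_apply_inv φ u x⟩

/-- The automorphism of `Aq` induced by `φ u` for `u` in the centralizer. -/
def betaA (u : Cq q) : Aq φ q ≃* Aq φ q :=
  QuotientGroup.congr (Kq φ q) (Kq φ q) (φ u.1) (Kq_map φ q u.2)

lemma betaA_mk (u : Cq q) (g : G) :
    betaA φ q u (QuotientGroup.mk g) = QuotientGroup.mk (φ u.1 g) := rfl

lemma smul_eq_betaA (u : Cq q) (x : Aq φ q) : u • x = betaA φ q u x := by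
  induction x using Quotient.inductionOn' with
  | h g => rfl

/-- Characters of `G` fixed by `q` are exactly characters of `Aq`. -/
def charEquiv : Xq φ q ≃ (Aq φ q →* ℂˣ) where
  toFun χ := QuotientGroup.lift (Kq φ q) χ.1 (by
    rintro x ⟨a, rfl⟩
    simp [χ.2 a])
  invFun ψ := ⟨ψ.comp (QuotientGroup.mk' _), fun g => by
    simp only [MonoidHom.comp_apply, QuotientGroup.mk'_apply]
    congr 1
    rw [QuotientGroup.eq]
    exact ⟨g⁻¹, by simp [mul_comm]⟩⟩
  left_inv χ := Subtype.ext (MonoidHom.ext fun g => rfl)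
  right_inv ψ := MonoidHom.ext fun x => by
    induction x using QuotientGroup.induction_on with
    | H g => rfl

lemma fixed_char_iff (u : Cq q) (χ : Xq φ q) :
    u • χ = χ ↔ ∀ g, χ.1 (φ u.1 g) = χ.1 g := by
  constructor
  · intro h g
    have h2 := congrArg (fun ξ : Xq φ q => ξ.1 (φ u.1 g)) h
    rw [← h2]
    show χ.1 (φ u.1⁻¹ (φ u.1 g)) = χ.1 g
    rw [phi_inv_apply_apply]
  · intro h
    apply Subtype.ext; apply MonoidHom.ext; intro g
    show χ.1 (φ u.1⁻¹ g) = χ.1 g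
    rw [← h (φ u.1⁻¹ g), phi_apply_apply_inv]

open MulAction in
lemma card_fixedBy_eq [Finite G] (u : Cq q) :
    Nat.card (fixedBy (Aq φ q) u) = Nat.card (fixedBy (Xq φ q) u) := by
  have hA : Nat.card (fixedBy (Aq φ q) u) = Nat.card {x : Aq φ q // betaA φ q u x = x} :=
    Nat.card_congr (Equiv.subtypeEquivRight fun x => by
      rw [mem_fixedBy, smul_eq_betaA])
  rw [hA, card_fixed_eq_card_fixed_char (Aq φ q) (betaA φ q u)]
  refine Nat.card_congr (Equiv.symm ?_)
  refine (Equiv.subtypeEquiv (charEquiv φ q) fun χ => ?_)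
  rw [mem_fixedBy, fixed_char_iff]
  constructor
  · intro h x
    induction x using QuotientGroup.induction_on with
    | H g => exact h g
  · intro h g
    exact h (QuotientGroup.mk g)

/-- the subtype of conjugacy classes over the class of `q`. -/
abbrev Sub16 := {γ : ConjClasses (G ⋊[φ] Q) //
    ∃ h : G ⋊[φ] Q, γ = ConjClasses.mk h ∧ IsConj q h.right}

lemma conj_left (a : G) (u : Q) (g : G) (r : Q) :
    ((⟨a, u⟩ : G ⋊[φ] Q) * ⟨g, r⟩ * (⟨a, u⟩ : G ⋊[φ] Q)⁻¹).left
      = a * φ u g * φ (u * r * u⁻¹) a⁻¹ := by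
  simp only [SemidirectProduct.mul_left, SemidirectProduct.inv_left,
    SemidirectProduct.inv_right, SemidirectProduct.mul_right, mulAut_mul_apply]

lemma conj_right (a : G) (u : Q) (g : G) (r : Q) :
    ((⟨a, u⟩ : G ⋊[φ] Q) * ⟨g, r⟩ * (⟨a, u⟩ : G ⋊[φ] Q)⁻¹).right = u * r * u⁻¹ := by
  simp [SemidirectProduct.mul_right, SemidirectProduct.inv_right, mul_assoc]

def toClassFun (g : G) : Sub16 φ q :=
  ⟨ConjClasses.mk ⟨g, q⟩, ⟨⟨g, q⟩, rfl, IsConj.refl q⟩⟩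

lemma toClassFun_eq_of_K {g g' : G} (h : g⁻¹ * g' ∈ Kq φ q) :
    toClassFun φ q g = toClassFun φ q g' := by
  obtain ⟨c, hc⟩ := h
  apply Subtype.ext
  apply ConjClasses.mk_eq_mk_iff_isConj.mpr
  apply isConj_iff.mpr
  refine ⟨⟨c⁻¹, 1⟩, ?_⟩
  have hg' : g' = g * (c⁻¹ * φ q c) := by
    rw [show c⁻¹ * φ q c = twHom φ q c from rfl, hc, ← mul_assoc, mul_inv_cancel, one_mul]
  apply SemidirectProduct.ext
  · rw [conj_left, hg']
    simp [mul_comm, mul_left_comm, mul_assoc]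
  · rw [conj_right]; simp

lemma toClassFun_eq_of_C {u : Q} (hu : u ∈ Cq q) (g : G) :
    toClassFun φ q (φ u g) = toClassFun φ q g := by
  apply Subtype.ext
  apply ConjClasses.mk_eq_mk_iff_isConj.mpr
  apply isConj_iff.mpr
  refine ⟨⟨1, u⁻¹⟩, ?_⟩
  have hq : u⁻¹ * q * u⁻¹⁻¹ = q := by
    rw [inv_inv, mul_assoc, comm_of_mem q hu, ← mul_assoc, inv_mul_cancel, one_mul]
  apply SemidirectProduct.ext
  · rw [conj_left, hq]; simp [phi_inv_apply_apply]
  · rw [conj_right, hq]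

open MulAction in
def classMap : Quotient (orbitRel (Cq q) (Aq φ q)) → Sub16 φ q :=
  Quotient.lift
    (fun x : Aq φ q => Quotient.liftOn' x (toClassFun φ q) (fun a b hab => by
      rw [QuotientGroup.leftRel_apply] at hab
      exact toClassFun_eq_of_K φ q hab))
    (by
      rintro x y ⟨u, rfl⟩
      induction y using Quotient.inductionOn' with
      | h g =>
        show Quotient.liftOn' (u • (QuotientGroup.mk g : Aq φ q)) _ _ = _
        rw [smul_mkA]
        exact toClassFun_eq_of_C φ q u.2 g)

open MulAction in
lemma classMap_bijective : Function.Bijective (classMap φ q) := by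
  constructor
  · intro x y hxy
    induction x using Quotient.inductionOn' with
    | h x' => induction y using Quotient.inductionOn' with
      | h y' =>
        induction x' using Quotient.inductionOn' with
        | h g => induction y' using Quotient.inductionOn' with
          | h g' =>
            have hmk : ConjClasses.mk (⟨g, q⟩ : G ⋊[φ] Q) = ConjClasses.mk ⟨g', q⟩ :=
              congrArg Subtype.val hxy
            obtain ⟨z, hz⟩ := isConj_iff.mp (ConjClasses.mk_eq_mk_iff_isConj.mp hmk)
            obtain ⟨a, u⟩ := z
            have hr : u * q * u⁻¹ = q := by
              have := congrArg SemidirectProduct.right hz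
              rwa [conj_right] at this
            have hu : u ∈ Cq q := by
              rw [Subgroup.mem_centralizer_iff]
              intro y hy
              rw [Set.mem_singleton_iff] at hy
              subst hy
              exact (mul_inv_eq_iff_eq_mul.mp hr).symm
            have hl : a * φ u g * φ q a⁻¹ = g' := by
              have := congrArg SemidirectProduct.left hz
              rwa [conj_left, hr] at this
            have hKrel : (φ u g)⁻¹ * g' ∈ Kq φ q := by
              refine ⟨a⁻¹, ?_⟩
              rw [← hl]
              simp [mul_comm, mul_left_comm, mul_assoc]
            have hsm : (⟨u, hu⟩ : Cq q) • (QuotientGroup.mk g : Aq φ q)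
                = QuotientGroup.mk g' := by
              rw [smul_mkA]
              exact QuotientGroup.eq.mpr hKrel
            exact Quotient.sound' (Setoid.symm' _ ⟨⟨u, hu⟩, hsm⟩)
  · rintro ⟨γ, w, rfl, hc⟩
    obtain ⟨c, hc⟩ := isConj_iff.mp hc
    refine ⟨Quotient.mk'' (QuotientGroup.mk (φ c⁻¹ w.left)), ?_⟩
    apply Subtype.ext
    show ConjClasses.mk (⟨φ c⁻¹ w.left, q⟩ : G ⋊[φ] Q) = ConjClasses.mk w
    apply ConjClasses.mk_eq_mk_iff_isConj.mpr
    apply isConj_iff.mpr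
    refine ⟨⟨1, c⟩, ?_⟩
    obtain ⟨wl, wr⟩ := w
    simp only at hc ⊢
    apply SemidirectProduct.ext
    · rw [conj_left]
      simp [phi_apply_apply_inv]
    · rw [conj_right]
      exact hc

end Stmt16Aux

/-- Let `G` be a finite abelian group, `φ : Q → Aut G` a homomorphism from a
finite group `Q`, `H = G ⋊_φ Q`, and `j : H → Q` the projection.  Let `Ĝ = Hom(G, ℂ×)` with
`Q` acting by `(q·χ)(g) = χ(φ(q)(g))`.  Fix `q ∈ Q` with conjugacy class `⟨q⟩`, centralizer
`C_Q(q)`, and fixed set `Ĝ^q`.  Then the number of conjugacy classes of `H` contained in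
`j⁻¹(⟨q⟩)` equals the number of orbits of `C_Q(q)` acting on `Ĝ^q`. -/
theorem stmt16 {G Q : Type} [CommGroup G] [Fintype G] [Group Q] [Fintype Q]
    (φ : Q →* MulAut G) (q : Q) :
    Nat.card {γ : ConjClasses (G ⋊[φ] Q) //
        ∃ h : G ⋊[φ] Q, γ = ConjClasses.mk h ∧ IsConj q h.right} =
      Nat.card (Quotient (charSetoid φ q)) := by
  classical
  have hfinX : Finite (Stmt16Aux.Xq φ q) := by
    have := Stmt16Aux.finite_dual G
    exact Subtype.finite
  have h1 : Nat.card {γ : ConjClasses (G ⋊[φ] Q) //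
      ∃ h : G ⋊[φ] Q, γ = ConjClasses.mk h ∧ IsConj q h.right}
      = Nat.card (Quotient (MulAction.orbitRel (Stmt16Aux.Cq q) (Stmt16Aux.Aq φ q))) :=
    (Nat.card_congr (Equiv.ofBijective _ (Stmt16Aux.classMap_bijective φ q))).symm
  have h2 : Nat.card (Quotient (MulAction.orbitRel (Stmt16Aux.Cq q) (Stmt16Aux.Aq φ q)))
      = Nat.card (Quotient (MulAction.orbitRel (Stmt16Aux.Cq q) (Stmt16Aux.Xq φ q))) :=
    Stmt16Aux.orbit_count_eq (Stmt16Aux.card_fixedBy_eq φ q)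
  rw [h1, h2, Stmt16Aux.charSetoid_eq φ q]
end
end

section
/- Every h ∈ H can be written uniquely as h = g·s(q) with g ∈ G and q = j(h); define E_{h,[ρ]} := ρ(g) ∘ (T_q^{[ρ]})⁻¹ : V_{q([ρ])} → V_ρ, set h([ρ]) := j(h)([ρ]), and extend c to H by c^{[ρ]}(h₁,h₂) := c^{[ρ]}(j(h₁), j(h₂)). Then for all h₁, h₂ ∈ H and [ρ] ∈ Ĝ: E_{h₁h₂,[ρ]} = c^{[ρ]}(h₁,h₂) · E_{h₁,[ρ]} ∘ E_{h₂,h₁([ρ])} (that is, the family {E_{h,[ρ]}} defines a c⁻¹-twisted H-equivariant structure on the family of vector spaces (V_ρ)_{[ρ]∈Ĝ}). -/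
noncomputable section

/-- For `h ∈ H` written (uniquely) as `h = g·s(q)` with `g = h·s(j h)⁻¹ ∈ G` and `q = j h`,
the map `E_{h,[ρ]} := ρ(g) ∘ (T_q^{[ρ]})⁻¹ : V_{q([ρ])} → V_ρ`. -/
def Emap {H Q : Type} [Group H] [Group Q] (j : H →* Q) (s : Q → H)
    (hs : ∀ q, j (s q) = q)
    {Ghat : Type} (V : Ghat → Type) [∀ r, AddCommGroup (V r)] [∀ r, Module ℂ (V r)]
    (ρ : ∀ r, Representation ℂ j.ker (V r))
    (act : Q → Ghat → Ghat) (T : ∀ (q : Q) (r : Ghat), V r ≃ₗ[ℂ] V (act q r))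
    (h : H) (r : Ghat) : V (act (j h) r) →ₗ[ℂ] V r :=
  (ρ r ⟨h * (s (j h))⁻¹, by simp [MonoidHom.mem_ker, hs]⟩ : V r →ₗ[ℂ] V r) ∘ₗ
    (T (j h) r).symm.toLinearMap

lemma castHom_trans {Ghat : Type} (V : Ghat → Type) [∀ r, AddCommGroup (V r)]
    [∀ r, Module ℂ (V r)] {a b d : Ghat} (h1 : a = b) (h2 : b = d) (v : V a) :
    castHom V h2 (castHom V h1 v) = castHom V (h1.trans h2) v := by
  subst h1; subst h2; rfl

lemma castHom_self {Ghat : Type} (V : Ghat → Type) [∀ r, AddCommGroup (V r)]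
    [∀ r, Module ℂ (V r)] {a : Ghat} (h : a = a) (v : V a) :
    castHom V h v = v := rfl

lemma Emap_eq {H Q : Type} [Group H] [Group Q] (j : H →* Q) (s : Q → H)
    (hs : ∀ q, j (s q) = q)
    {Ghat : Type} (V : Ghat → Type) [∀ r, AddCommGroup (V r)] [∀ r, Module ℂ (V r)]
    (ρ : ∀ r, Representation ℂ j.ker (V r))
    (act : Q → Ghat → Ghat) (T : ∀ (q : Q) (r : Ghat), V r ≃ₗ[ℂ] V (act q r))
    (h : H) (r : Ghat) (q : Q) (hq : j h = q) (v : V (act (j h) r)) :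
    Emap j s hs V ρ act T h r v =
      ρ r ⟨h * (s q)⁻¹, by simp [MonoidHom.mem_ker, hs, ← hq]⟩
        ((T q r).symm (castHom V (by rw [hq]) v)) := by
  subst hq; rfl

/-- Every `h ∈ H` is uniquely `h = g·s(q)` with `g ∈ G`, `q = j h`; with
`E_{h,[ρ]} := ρ(g)∘(T_{j h}^{[ρ]})⁻¹`, `h([ρ]) := (j h)([ρ])` and
`c^{[ρ]}(h₁,h₂) := c^{[ρ]}(j h₁, j h₂)`, one has
`E_{h₁h₂,[ρ]} = c^{[ρ]}(h₁,h₂) · E_{h₁,[ρ]} ∘ E_{h₂,h₁([ρ])}` for all `h₁, h₂ ∈ H` and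
`[ρ] ∈ Ĝ`; that is, `{E_{h,[ρ]}}` is a `c⁻¹`-twisted `H`-equivariant structure on the family
`(V_ρ)`. -/
theorem stmt17 {H Q : Type} [Group H] [Group Q] [Fintype H] [Fintype Q]
    (j : H →* Q) (hj : Function.Surjective j)
    (s : Q → H) (hs : ∀ q, j (s q) = q) (hs1 : s 1 = 1)
    {Ghat : Type} [Fintype Ghat]
    (V : Ghat → Type) [∀ r, AddCommGroup (V r)] [∀ r, Module ℂ (V r)]
    [∀ r, FiniteDimensional ℂ (V r)]
    (ρ : ∀ r, Representation ℂ j.ker (V r))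
    (hirr : ∀ r, IsIrredRep (ρ r))
    (hdist : ∀ r r', RepIso (ρ r) (ρ r') → r = r')
    (act : Q → Ghat → Ghat)
    (hact : ∀ q r, RepIso (conjRep j (ρ r) (s q)) (ρ (act q r)))
    (hact1 : ∀ r, act 1 r = r)
    (hactmul : ∀ (q₁ q₂ : Q) (r : Ghat), act q₂ (act q₁ r) = act (q₁ * q₂) r)
    (T : ∀ (q : Q) (r : Ghat), V r ≃ₗ[ℂ] V (act q r))
    (hT : ∀ (q : Q) (r : Ghat) (g : j.ker) (v : V r),
      T q r (conjRep j (ρ r) (s q) g v) = ρ (act q r) g (T q r v))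
    (hT1 : ∀ (r : Ghat) (v : V r), T 1 r v = castHom V (hact1 r).symm v)
    (c : Ghat → Q → Q → ℂ)
    (hcdef : ∀ (r : Ghat) (q₁ q₂ : Q) (v : V r),
      T q₂ (act q₁ r) (T q₁ r v) =
        c r q₁ q₂ • castHom V (hactmul q₁ q₂ r).symm
          (T (q₁ * q₂) r (ρ r ((tau j s hs q₁ q₂)⁻¹) v))) :
    (∀ h : H, ∃! p : j.ker × Q, (p.1 : H) * s p.2 = h) ∧
    (∀ (h₁ h₂ : H) (r : Ghat),
      Emap j s hs V ρ act T (h₁ * h₂) r =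
        c r (j h₁) (j h₂) •
          (Emap j s hs V ρ act T h₁ r ∘ₗ Emap j s hs V ρ act T h₂ (act (j h₁) r) ∘ₗ
            castHom V
              (show act (j (h₁ * h₂)) r = act (j h₂) (act (j h₁) r) by
                rw [map_mul, ← hactmul]))) := by
  constructor
  · intro h
    refine ⟨(⟨h * (s (j h))⁻¹, by simp [MonoidHom.mem_ker, hs]⟩, j h), by simp, ?_⟩
    rintro ⟨g, q⟩ hgq
    simp only at hgq
    subst hgq
    have hq : j (↑g * s q) = q := by
      rw [map_mul, hs, MonoidHom.mem_ker.mp g.2, one_mul]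
    refine Prod.ext (Subtype.ext ?_) hq.symm
    show (g : H) = ↑g * s q * (s (j (↑g * s q)))⁻¹
    rw [hq]
    group
  · intro h₁ h₂ r
    have hj12 : j (h₁ * h₂) = j h₁ * j h₂ := map_mul j h₁ h₂
    have pf : act (j h₂) (act (j h₁) r) = act (j (h₁ * h₂)) r :=
      (hactmul (j h₁) (j h₂) r).trans (by rw [hj12])
    apply LinearMap.ext; intro v
    obtain ⟨w, rfl⟩ : ∃ w, castHom V pf (T (j h₂) (act (j h₁) r) (T (j h₁) r w)) = v :=
      ⟨(T (j h₁) r).symm ((T (j h₂) (act (j h₁) r)).symm (castHom V pf.symm v)), by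
        simp [castHom_trans, castHom_self]⟩
    simp only [LinearMap.smul_apply, LinearMap.comp_apply]
    rw [Emap_eq j s hs V ρ act T (h₁ * h₂) r (j h₁ * j h₂) hj12,
      Emap_eq j s hs V ρ act T h₁ r (j h₁) rfl,
      Emap_eq j s hs V ρ act T h₂ (act (j h₁) r) (j h₂) rfl]
    simp only [castHom_trans, castHom_self, LinearEquiv.symm_apply_apply]
    rw [hcdef r (j h₁) (j h₂) w]
    simp only [map_smul, castHom_trans, castHom_self, LinearEquiv.symm_apply_apply]
    have step : (T (j h₁) r).symm (ρ (act (j h₁) r)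
        ⟨h₂ * (s (j h₂))⁻¹, by simp [MonoidHom.mem_ker, hs]⟩ (T (j h₁) r w)) =
        conjRep j (ρ r) (s (j h₁)) ⟨h₂ * (s (j h₂))⁻¹, by simp [MonoidHom.mem_ker, hs]⟩ w := by
      rw [← hT, LinearEquiv.symm_apply_apply]
    rw [step]
    have key : (⟨h₁ * h₂ * (s (j h₁ * j h₂))⁻¹, by
          rw [MonoidHom.mem_ker, map_mul, map_inv, hs, hj12]; group⟩ : j.ker) * (tau j s hs (j h₁) (j h₂))⁻¹ =
        ⟨h₁ * (s (j h₁))⁻¹, by simp [MonoidHom.mem_ker, hs]⟩ *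
          (MulAut.conjNormal (s (j h₁))) ⟨h₂ * (s (j h₂))⁻¹, by
            simp [MonoidHom.mem_ker, hs]⟩ := by
      ext
      simp only [Subgroup.coe_mul, tau, MulAut.conjNormal_apply, InvMemClass.coe_inv]
      group
    rw [← Module.End.mul_apply, ← map_mul, key, map_mul]
    rfl
end
end

section
/- Let R be a finite set of irreducible finite-dimensional complex representations of G containing exactly one representative from each isomorphism class, and let χ_ρ denote the character of ρ ∈ R. Then for all g₁, g₂ ∈ G: ∑_{ρ∈R} ∑_{q∈Q} χ_ρ(g₁⁻¹)·χ_ρ(s(q)·g₂·s(q)⁻¹) equals |C_H(g₁)| (the order of the centralizer of g₁ in H) if g₁ and g₂ are conjugate in H, and equals 0 otherwise. (Equivalently, ∑_{[ρ]∈Ĝ} ∑_{q∈Q} χ_ρ(g₁⁻¹)·χ_{q([ρ])}(g₂) equals |C_H(g₁)| or 0 accordingly, since χ_{q([ρ])}(g₂) = χ_ρ(s(q)g₂s(q)⁻¹).) -/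
noncomputable section

/-!
Column orthogonality for `G`: `∑_ρ χ_ρ(a⁻¹) χ_ρ(b)` is the number of `g ∈ G` with
`g b g⁻¹ = a`. It follows from row orthogonality once a class function `f` orthogonal to every
irreducible character is known to vanish; such an `f` makes `∑_g f(g) σ(g⁻¹)` zero on every
representation `σ` (Schur's lemma on irreducibles, Maschke's theorem in general), in particular on
the regular representation, where applied to `1 ∈ ℂ[G]` it recovers the values of `f`.

For `b = s(q) g₂ s(q)⁻¹` these counts, summed over `q`, count the `h ∈ H` with `h g₂ h⁻¹ = g₁`,
because `H` is the disjoint union of the cosets `G s(q)`. That set is a coset of `C_H(g₁)` when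
`g₁` and `g₂` are conjugate, and empty otherwise.
-/

open Representation LinearMap Module

section Irreducible

variable {Γ V W : Type} [Group Γ] [AddCommGroup V] [Module ℂ V] [AddCommGroup W] [Module ℂ W]

theorem IsIrredRep.isIrreducible {σ : Representation ℂ Γ V} (hσ : IsIrredRep σ) :
    σ.IsIrreducible := by
  have := hσ.1
  refine { exists_pair_ne := ⟨⊥, ⊤, fun h => ?_⟩, eq_bot_or_eq_top := fun p => ?_ }
  · exact bot_ne_top (congrArg Subrepresentation.toSubmodule h)
  · rcases hσ.2 p.toSubmodule p.apply_mem_toSubmodule with h | h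
    · exact .inl (Subrepresentation.ext h)
    · exact .inr (Subrepresentation.ext h)

theorem repIso_iff_nonempty_equiv {ρ : Representation ℂ Γ V} {σ : Representation ℂ Γ W} :
    RepIso ρ σ ↔ Nonempty (ρ.Equiv σ) :=
  ⟨fun ⟨e, he⟩ => ⟨.mk e fun g => LinearMap.ext (he g)⟩,
    fun ⟨φ⟩ => ⟨φ.toLinearEquiv, φ.toIntertwiningMap.isIntertwining⟩⟩

theorem IsIrredRep.exists_eq_smul_id [FiniteDimensional ℂ V] {σ : Representation ℂ Γ V}
    (hσ : IsIrredRep σ) (T : V →ₗ[ℂ] V) (hT : ∀ g, T ∘ₗ σ g = σ g ∘ₗ T) :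
    ∃ c : ℂ, T = c • LinearMap.id := by
  have := hσ.isIrreducible
  obtain ⟨c, hc⟩ := IsIrreducible.algebraMap_intertwiningMap_bijective_of_isAlgClosed.2
    (⟨T, hT⟩ : σ.IntertwiningMap σ)
  exact ⟨c, (congrArg IntertwiningMap.toLinearMap hc).symm⟩

end Irreducible

section CharacterTable

variable {Γ Ghat : Type} [Group Γ] [Fintype Γ] {V : Ghat → Type}
  [∀ r, AddCommGroup (V r)] [∀ r, Module ℂ (V r)] {ρ : ∀ r, Representation ℂ Γ (V r)}

theorem sum_character_mul_character_inv [∀ r, FiniteDimensional ℂ (V r)] [DecidableEq Ghat]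
    (hirr : ∀ r, IsIrredRep (ρ r)) (hdist : ∀ r r', RepIso (ρ r) (ρ r') → r = r') (r r' : Ghat) :
    ∑ g, (ρ r).character g * (ρ r').character g⁻¹ = if r = r' then (Nat.card Γ : ℂ) else 0 := by
  have := (hirr r).isIrreducible
  have := (hirr r').isIrreducible
  have := invertibleOfNonzero (NeZero.ne (Nat.card Γ : ℂ))
  have horth := char_orthonormal (ρ r) (ρ r')
  have hequiv : Nonempty ((ρ r').Equiv (ρ r)) ↔ r = r' :=
    ⟨fun h => (hdist r' r (repIso_iff_nonempty_equiv.2 h)).symm,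
      fun h => h ▸ ⟨Representation.Equiv.refl _⟩⟩
  rw [inv_mul_eq_iff_eq_mul₀ (NeZero.ne _)] at horth
  simp only [horth, hequiv]
  split_ifs <;> simp

variable (hcomplete : ∀ (W : Type) [AddCommGroup W] [Module ℂ W] [FiniteDimensional ℂ W]
    (σ : Representation ℂ Γ W), IsIrredRep σ → ∃ r, RepIso σ (ρ r))
  {f : Γ → ℂ} (hf : ∀ g x, f (g * x * g⁻¹) = f x)
  (horth : ∀ r, ∑ g, f g * (ρ r).character g⁻¹ = 0)
include hcomplete hf horth

theorem sum_smul_inv_eq_zero_of_isIrredRep {W : Type} [AddCommGroup W] [Module ℂ W]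
    [FiniteDimensional ℂ W] {σ : Representation ℂ Γ W} (hσ : IsIrredRep σ) :
    ∑ g, f g • σ g⁻¹ = 0 := by
  set T := ∑ g, f g • σ g⁻¹
  have hT : ∀ h, T ∘ₗ σ h = σ h ∘ₗ T := by
    intro h
    simp only [T, ← Module.End.mul_eq_comp, Finset.sum_mul, Finset.mul_sum, smul_mul_assoc,
      mul_smul_comm, ← map_mul]
    refine Fintype.sum_equiv (MulAut.conj h⁻¹).toEquiv _ _ fun g => ?_
    simp only [MulEquiv.toEquiv_eq_coe, EquivLike.coe_coe, MulAut.conj_apply]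
    rw [hf]
    congr 2
    group
  obtain ⟨c, hc⟩ := hσ.exists_eq_smul_id T hT
  obtain ⟨r, hr⟩ := hcomplete W σ hσ
  obtain ⟨φ⟩ := repIso_iff_nonempty_equiv.1 hr
  have htrace : c * finrank ℂ W = ∑ g, f g * σ.character g⁻¹ := by
    calc c * finrank ℂ W = trace ℂ W T := by rw [hc, map_smul, trace_id, smul_eq_mul]
      _ = ∑ g, f g * σ.character g⁻¹ := by simp [T, map_sum, character]
  rw [char_iso φ, horth] at htrace
  have := hσ.1
  rw [hc, (mul_eq_zero.1 htrace).resolve_right (by simp [finrank_pos.ne']), zero_smul]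

theorem sum_smul_inv_eq_zero {W : Type} [AddCommGroup W] [Module ℂ W] [FiniteDimensional ℂ W]
    (σ : Representation ℂ Γ W) : ∑ g, f g • σ g⁻¹ = 0 := by
  induction hn : finrank ℂ W using Nat.strong_induction_on generalizing W with
  | _ n ih =>
    rcases subsingleton_or_nontrivial W with hW | hW
    · exact Subsingleton.elim _ _
    by_cases hσ : IsIrredRep σ
    · exact sum_smul_inv_eq_zero_of_isIrredRep hcomplete hf horth hσ
    obtain ⟨p, hp, hp_bot, hp_top⟩ : ∃ p : Submodule ℂ W, (∀ g, ∀ v ∈ p, σ g v ∈ p) ∧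
        p ≠ ⊥ ∧ p ≠ ⊤ := by
      simpa [IsIrredRep, hW] using hσ
    have hvanish (S : Subrepresentation σ) (hS : S.toSubmodule ≠ ⊤) :
        S.toSubmodule ≤ ker (∑ g, f g • σ g⁻¹) := by
      intro v hv
      have := congrArg (fun T => (T ⟨v, hv⟩ : W))
        (ih _ (hn ▸ Submodule.finrank_lt hS) S.toRepresentation rfl)
      simpa [Subrepresentation.toRepresentation] using this
    let P : Subrepresentation σ := ⟨p, hp⟩
    -- Maschke's theorem, as the instance `IsSemisimpleRepresentation σ`
    obtain ⟨Q, hPQ⟩ := exists_isCompl P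
    have hQ : Q.toSubmodule ≠ ⊤ := fun h => hp_bot <| congrArg Subrepresentation.toSubmodule <|
      eq_bot_of_isCompl_top (Subrepresentation.ext (x := Q) (y := ⊤) h ▸ hPQ)
    have hsup : p ⊔ Q.toSubmodule = ⊤ := congrArg Subrepresentation.toSubmodule hPQ.sup_eq_top
    rw [← ker_eq_top, eq_top_iff, ← hsup]
    exact sup_le (hvanish P hp_top) (hvanish Q hQ)

theorem eq_zero_of_sum_mul_character_inv_eq_zero : f = 0 := by
  classical
  ext x
  have := congrArg (fun T => (T (MonoidAlgebra.single 1 1)).coeff x⁻¹)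
    (sum_smul_inv_eq_zero hcomplete hf horth (leftRegular ℂ Γ))
  simpa [ofMulAction_single, MonoidAlgebra.coeff_single, Finsupp.single_apply] using this

end CharacterTable

section ColumnOrthogonality

variable {Γ Ghat : Type} [Group Γ] [Fintype Γ] [Fintype Ghat] {V : Ghat → Type}
  [∀ r, AddCommGroup (V r)] [∀ r, Module ℂ (V r)] [∀ r, FiniteDimensional ℂ (V r)]
  {ρ : ∀ r, Representation ℂ Γ (V r)}
  (hirr : ∀ r, IsIrredRep (ρ r)) (hdist : ∀ r r', RepIso (ρ r) (ρ r') → r = r')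
  (hcomplete : ∀ (W : Type) [AddCommGroup W] [Module ℂ W] [FiniteDimensional ℂ W]
    (σ : Representation ℂ Γ W), IsIrredRep σ → ∃ r, RepIso σ (ρ r))
include hirr hdist hcomplete

theorem card_mul_eq_sum_character {f : Γ → ℂ} (hf : ∀ g x, f (g * x * g⁻¹) = f x) (x : Γ) :
    Nat.card Γ * f x = ∑ r, (∑ g, f g * (ρ r).character g⁻¹) * (ρ r).character x := by
  classical
  let c : Ghat → ℂ := fun r => ∑ g, f g * (ρ r).character g⁻¹
  let F : Γ → ℂ := fun y => Nat.card Γ * f y - ∑ r, c r * (ρ r).character y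
  have hF : ∀ g y, F (g * y * g⁻¹) = F y := fun g y => by simp [F, hf]
  have hFχ : ∀ r', ∑ y, F y * (ρ r').character y⁻¹ = 0 := fun r' => by
    simp only [F, sub_mul, Finset.sum_sub_distrib, Finset.sum_mul, mul_assoc, ← Finset.mul_sum]
    rw [Finset.sum_comm]
    simp [← Finset.mul_sum, sum_character_mul_character_inv hirr hdist, c]
    ring
  simpa [F, sub_eq_zero] using
    congrFun (eq_zero_of_sum_mul_character_inv_eq_zero hcomplete hF hFχ) x

theorem sum_character_inv_mul_character (a b : Γ) :
    ∑ r, (ρ r).character a⁻¹ * (ρ r).character b = Nat.card {g : Γ // g * b * g⁻¹ = a} := by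
  classical
  let N : Γ → ℂ := fun x => Nat.card {g : Γ // g * x * g⁻¹ = a}
  have hN : ∀ x, N x = ∑ g, if g * x * g⁻¹ = a then 1 else 0 := fun x => by
    simp [N, Finset.sum_boole, Nat.card_eq_fintype_card, Fintype.card_subtype]
  have hN_conj : ∀ h x, N (h * x * h⁻¹) = N x := fun h x =>
    congrArg Nat.cast <| Nat.card_congr <|
      (Equiv.mulRight h).subtypeEquiv fun g => by simp [mul_assoc]
  have hNχ : ∀ r, ∑ x, N x * (ρ r).character x⁻¹ = Nat.card Γ * (ρ r).character a⁻¹ := by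
    intro r
    have hsolve (g x : Γ) : g * x * g⁻¹ = a ↔ x = g⁻¹ * a * g := by
      constructor <;> rintro rfl <;> group
    simp only [hN, Finset.sum_mul, ite_mul, one_mul, zero_mul, hsolve]
    have hχ (x : Γ) : (ρ r).character (x⁻¹ * a⁻¹ * x) = (ρ r).character a⁻¹ := by
      simpa using (ρ r).char_conj a⁻¹ x⁻¹
    rw [Finset.sum_comm]
    simp [← mul_assoc, hχ, Nat.card_eq_fintype_card]
  have := card_mul_eq_sum_character hirr hdist hcomplete hN_conj b
  simp only [hNχ, mul_assoc, ← Finset.mul_sum] at this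
  exact (mul_left_cancel₀ (NeZero.ne _) this).symm

end ColumnOrthogonality

section Conjugators

variable {K : Type} [Group K]

theorem card_conjugators_of_isConj {a b : K} (hab : IsConj a b) :
    Nat.card {h : K // h * b * h⁻¹ = a} = Nat.card (Subgroup.centralizer {a}) := by
  obtain ⟨c, rfl⟩ := isConj_iff.1 hab
  refine Nat.card_congr <|
    ((Equiv.mulRight c).subtypeEquiv (q := fun z => z * a * z⁻¹ = a) fun h => ?_).trans
      (Equiv.subtypeEquivRight fun z => ?_)
  · simp [mul_assoc]
  · rw [Subgroup.mem_centralizer_singleton_iff, mul_inv_eq_iff_eq_mul]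

theorem card_conjugators_of_not_isConj {a b : K} (hab : ¬IsConj a b) :
    Nat.card {h : K // h * b * h⁻¹ = a} = 0 :=
  Nat.card_eq_zero.2 <| .inl ⟨fun ⟨h, hh⟩ => hab (isConj_iff.2 ⟨h⁻¹, by simp [← hh, mul_assoc]⟩)⟩

end Conjugators

section Extension

variable {H Q : Type} [Group H] [Group Q] (j : H →* Q) {s : Q → H}

def MonoidHom.prodKerEquivOfRightInverse (hs : Function.RightInverse s j) : Q × j.ker ≃ H where
  toFun x := x.2 * s x.1
  invFun h := (j h, ⟨h * (s (j h))⁻¹, by simp [hs _]⟩)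
  left_inv := fun ⟨q, g, hg⟩ => by
    have hq : j (g * s q) = q := by simp [MonoidHom.mem_ker.1 hg, hs _]
    simp [hq]
  right_inv h := by simp

theorem MonoidHom.card_subtype_eq_sum_card_ker [Fintype Q] [Finite H]
    (hs : Function.RightInverse s j) (P : H → Prop) :
    Nat.card {h : H // P h} = ∑ q, Nat.card {g : j.ker // P (g * s q)} := by
  rw [← Nat.card_sigma]
  exact Nat.card_congr <|
    ((j.prodKerEquivOfRightInverse hs).subtypeEquiv fun _ => Iff.rfl).symm.trans
      (Equiv.subtypeProdEquivSigmaSubtype fun q (g : j.ker) => P (g * s q))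

end Extension

theorem stmt19_general {H Q : Type} [Group H] [Group Q] [Fintype H] [Fintype Q]
    (j : H →* Q)
    (s : Q → H) (hs : ∀ q, j (s q) = q)
    {Ghat : Type} [Fintype Ghat]
    (V : Ghat → Type) [∀ r, AddCommGroup (V r)] [∀ r, Module ℂ (V r)]
    [∀ r, FiniteDimensional ℂ (V r)]
    (ρ : ∀ r, Representation ℂ j.ker (V r))
    (hirr : ∀ r, IsIrredRep (ρ r))
    (hdist : ∀ r r', RepIso (ρ r) (ρ r') → r = r')
    (hcomplete : ∀ (W : Type) [AddCommGroup W] [Module ℂ W] [FiniteDimensional ℂ W]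
      (σ : Representation ℂ j.ker W), IsIrredRep σ → ∃ r, RepIso σ (ρ r))
    (g₁ g₂ : j.ker) :
    (IsConj (g₁ : H) (g₂ : H) →
      ∑ r : Ghat, ∑ q : Q,
          LinearMap.trace ℂ (V r) (ρ r g₁⁻¹) *
            LinearMap.trace ℂ (V r) (conjRep j (ρ r) (s q) g₂) =
        (Nat.card (Subgroup.centralizer ({(g₁ : H)} : Set H)) : ℂ)) ∧
    (¬ IsConj (g₁ : H) (g₂ : H) →
      ∑ r : Ghat, ∑ q : Q,
          LinearMap.trace ℂ (V r) (ρ r g₁⁻¹) *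
            LinearMap.trace ℂ (V r) (conjRep j (ρ r) (s q) g₂) = 0) := by
  have := Fintype.ofFinite j.ker
  have hfiber (q : Q) :
      ∑ r, trace ℂ (V r) (ρ r g₁⁻¹) * trace ℂ (V r) (conjRep j (ρ r) (s q) g₂) =
        Nat.card {g : j.ker // g * s q * g₂ * (g * s q)⁻¹ = (g₁ : H)} := by
    refine (sum_character_inv_mul_character hirr hdist hcomplete g₁
      (MulAut.conjNormal (s q) g₂)).trans (congrArg Nat.cast (Nat.card_congr ?_))
    exact Equiv.subtypeEquivRight fun g => by simp [Subtype.ext_iff, mul_assoc]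
  have htotal :
      ∑ r, ∑ q, trace ℂ (V r) (ρ r g₁⁻¹) * trace ℂ (V r) (conjRep j (ρ r) (s q) g₂) =
        Nat.card {h : H // h * g₂ * h⁻¹ = g₁} := by
    rw [Finset.sum_comm, Finset.sum_congr rfl fun q _ => hfiber q, ← Nat.cast_sum,
      j.card_subtype_eq_sum_card_ker hs fun h => h * g₂ * h⁻¹ = g₁]
  rw [htotal]
  exact ⟨fun h => by rw [card_conjugators_of_isConj h],
    fun h => by rw [card_conjugators_of_not_isConj h, Nat.cast_zero]⟩

/-- Let `R = {ρ_r : r ∈ Ĝ}` contain exactly one representative of each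
isomorphism class of irreducible finite-dimensional complex representations of `G = ker j`,
with characters `χ_ρ = tr ∘ ρ`.  Then for all `g₁, g₂ ∈ G`,
`∑_{ρ∈R} ∑_{q∈Q} χ_ρ(g₁⁻¹)·χ_ρ(s(q)·g₂·s(q)⁻¹)` equals `|C_H(g₁)|` if `g₁` and `g₂` are
conjugate in `H`, and equals `0` otherwise. -/
theorem stmt19 {H Q : Type} [Group H] [Group Q] [Fintype H] [Fintype Q]
    (j : H →* Q) (hj : Function.Surjective j)
    (s : Q → H) (hs : ∀ q, j (s q) = q) (hs1 : s 1 = 1)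
    {Ghat : Type} [Fintype Ghat]
    (V : Ghat → Type) [∀ r, AddCommGroup (V r)] [∀ r, Module ℂ (V r)]
    [∀ r, FiniteDimensional ℂ (V r)]
    (ρ : ∀ r, Representation ℂ j.ker (V r))
    (hirr : ∀ r, IsIrredRep (ρ r))
    (hdist : ∀ r r', RepIso (ρ r) (ρ r') → r = r')
    (hcomplete : ∀ (W : Type) [AddCommGroup W] [Module ℂ W] [FiniteDimensional ℂ W]
      (σ : Representation ℂ j.ker W), IsIrredRep σ → ∃ r, RepIso σ (ρ r))
    (g₁ g₂ : j.ker) :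
    (IsConj (g₁ : H) (g₂ : H) →
      ∑ r : Ghat, ∑ q : Q,
          LinearMap.trace ℂ (V r) (ρ r g₁⁻¹) *
            LinearMap.trace ℂ (V r) (conjRep j (ρ r) (s q) g₂) =
        (Nat.card (Subgroup.centralizer ({(g₁ : H)} : Set H)) : ℂ)) ∧
    (¬ IsConj (g₁ : H) (g₂ : H) →
      ∑ r : Ghat, ∑ q : Q,
          LinearMap.trace ℂ (V r) (ρ r g₁⁻¹) *
            LinearMap.trace ℂ (V r) (conjRep j (ρ r) (s q) g₂) = 0) :=
  stmt19_general j s hs V ρ hirr hdist hcomplete g₁ g₂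
end
end
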